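/- Let H be an acceptable Hintikka set and s, t closed formulas. If (s ∨ t) ∈ H, then s ∈ H or t ∈ H. -/
import Mathlib


namespace HintikkaHOL

/-- Simple types over base types `o` (Booleans) and `i` (individuals). -/
inductive Ty : Type
  | o : Ty
  | i : Ty
  | arr : Ty → Ty → Ty
deriving DecidableEq

open Ty

/-- Typed de Bruijn variables. -/
inductive Var : List Ty → Ty → Type
  | vz {Γ τ} : Var (τ :: Γ) τ
  | vs {Γ σ τ} : Var Γ τ → Var (σ :: Γ) τ

/-- Terms of Church's type theory over a signature `S` of parameters,
with primitive equality `eq τ : τ → τ → o` as the only logical constant. -/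
inductive Tm (S : Ty → Type) : List Ty → Ty → Type
  | var {Γ τ} : Var Γ τ → Tm S Γ τ
  | par {Γ τ} : S τ → Tm S Γ τ
  | eq {Γ} (τ : Ty) : Tm S Γ (arr τ (arr τ o))
  | app {Γ a b} : Tm S Γ (arr a b) → Tm S Γ a → Tm S Γ b
  | lam {Γ a b} : Tm S (a :: Γ) b → Tm S Γ (arr a b)

variable {S : Ty → Type}

/-- Renamings. -/
abbrev Ren (Γ Δ : List Ty) : Type := ∀ τ, Var Γ τ → Var Δ τ

def Ren.lift {Γ Δ} (r : Ren Γ Δ) (σ : Ty) : Ren (σ :: Γ) (σ :: Δ)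
  | _, .vz => .vz
  | _, .vs w => .vs (r _ w)

def rename {Γ Δ} (r : Ren Γ Δ) : ∀ {τ}, Tm S Γ τ → Tm S Δ τ
  | _, .var v => .var (r _ v)
  | _, .par p => .par p
  | _, .eq τ => .eq τ
  | _, .app f a => .app (rename r f) (rename r a)
  | _, .lam b => .lam (rename (Ren.lift r _) b)

/-- Substitutions. -/
abbrev Sub (S : Ty → Type) (Γ Δ : List Ty) : Type := ∀ τ, Var Γ τ → Tm S Δ τ

def Sub.lift {Γ Δ} (s : Sub S Γ Δ) (σ : Ty) : Sub S (σ :: Γ) (σ :: Δ)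
  | _, .vz => .var .vz
  | _, .vs w => rename (fun _ u => Var.vs u) (s _ w)

def subst {Γ Δ} (s : Sub S Γ Δ) : ∀ {τ}, Tm S Γ τ → Tm S Δ τ
  | _, .var v => s _ v
  | _, .par p => .par p
  | _, .eq τ => .eq τ
  | _, .app f a => .app (subst s f) (subst s a)
  | _, .lam b => .lam (subst (Sub.lift s _) b)

/-- The substitution sending the outermost variable to `a`. -/
def Sub.single {Γ σ} (a : Tm S Γ σ) : Sub S (σ :: Γ) Γ
  | _, .vz => a
  | _, .vs w => .var w

def subst1 {Γ σ τ} (a : Tm S Γ σ) (b : Tm S (σ :: Γ) τ) : Tm S Γ τ :=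
  subst (Sub.single a) b

/-- Weakening of a closed term into any context. -/
def Ren.fromEmpty {Γ} : Ren [] Γ := fun _ v => nomatch v

def wk0 {Γ τ} (t : Tm S [] τ) : Tm S Γ τ :=
  rename Ren.fromEmpty t

/-- The equation `s =^τ t`. -/
def eqT {Γ} (τ : Ty) (s t : Tm S Γ τ) : Tm S Γ o :=
  .app (.app (.eq τ) s) t

/-- `⊤ := (=^o) =^{ooo} (=^o)`. -/
def topT {Γ} : Tm S Γ o :=
  eqT (arr o (arr o o)) (.eq o) (.eq o)

/-- `⊥ := (λP:o. P) =^{oo} (λP:o. ⊤)`. -/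
def botT {Γ} : Tm S Γ o :=
  eqT (arr o o) (.lam (.var .vz)) (.lam topT)

/-- `¬ := λP:o. P =^o ⊥`. -/
def notC {Γ} : Tm S Γ (arr o o) :=
  .lam (eqT o (.var .vz) botT)

/-- `¬ s`. -/
def negT {Γ} (s : Tm S Γ o) : Tm S Γ o :=
  .app notC s

/-- `∧ := λP Q. (λF:ooo. F ⊤ ⊤) =^{o(ooo)} (λF. F P Q)`. -/
def andC {Γ} : Tm S Γ (arr o (arr o o)) :=
  .lam (.lam (eqT (arr (arr o (arr o o)) o)
    (.lam (.app (.app (.var .vz) topT) topT))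
    (.lam (.app (.app (.var .vz) (.var (.vs (.vs .vz)))) (.var (.vs .vz))))))

/-- `∨ := λP Q. ¬(¬P ∧ ¬Q)`. -/
def orC {Γ} : Tm S Γ (arr o (arr o o)) :=
  .lam (.lam (negT (.app (.app andC (negT (.var (.vs .vz)))) (negT (.var .vz)))))

/-- `⇒ := λP Q. ¬P ∨ Q`. -/
def impC {Γ} : Tm S Γ (arr o (arr o o)) :=
  .lam (.lam (.app (.app orC (negT (.var (.vs .vz)))) (.var .vz)))

/-- `Π^τ := λP:oτ. P =^{oτ} (λX:τ. ⊤)`. -/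
def piC {Γ} (τ : Ty) : Tm S Γ (arr (arr τ o) o) :=
  .lam (eqT (arr τ o) (.var .vz) (.lam topT))

/-- Leibniz equality `s ≐ t := Π^{oτ} (λP:oτ. (P s) ⇒ (P t))`. -/
def leibT {Γ τ} (s t : Tm S Γ τ) : Tm S Γ o :=
  .app (piC (arr τ o))
    (.lam (.app (.app impC (.app (.var .vz) (rename (fun _ v => Var.vs v) s)))
                (.app (.var .vz) (rename (fun _ v => Var.vs v) t))))

/-- βη-conversion. -/
inductive Conv : ∀ {Γ : List Ty} {τ : Ty}, Tm S Γ τ → Tm S Γ τ → Prop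
  | refl {Γ τ} (s : Tm S Γ τ) : Conv s s
  | symm {Γ τ} {s t : Tm S Γ τ} : Conv s t → Conv t s
  | trans {Γ τ} {s t u : Tm S Γ τ} : Conv s t → Conv t u → Conv s u
  | appCongr {Γ a b} {f f' : Tm S Γ (arr a b)} {s s' : Tm S Γ a} :
      Conv f f' → Conv s s' → Conv (.app f s) (.app f' s')
  | lamCongr {Γ a b} {s s' : Tm S (a :: Γ) b} :
      Conv s s' → Conv (.lam s) (.lam s')
  | beta {Γ a b} (body : Tm S (a :: Γ) b) (s : Tm S Γ a) :
      Conv (.app (.lam body) s) (subst1 s body)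
  | eta {Γ a b} (f : Tm S Γ (arr a b)) :
      Conv (.lam (.app (rename (fun _ v => Var.vs v) f) (.var .vz))) f

/-- Atomic formulas: head symbol is a parameter (or a variable). -/
inductive Atomic : ∀ {Γ : List Ty} {τ : Ty}, Tm S Γ τ → Prop
  | par {Γ τ} (p : S τ) : Atomic (Tm.par (Γ := Γ) p)
  | var {Γ τ} (v : Var Γ τ) : Atomic (Tm.var (S := S) v)
  | app {Γ a b} {f : Tm S Γ (arr a b)} {s : Tm S Γ a} : Atomic f → Atomic (.app f s)

/-- Paired spines of closed arguments, for the decomposition property `∇_d`: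
a value of `Spine2 S σ τ` is a list of pairs `(sⁱ, tⁱ)` of closed terms turning a head
of type `σ` into two applications `h s¹ … sⁿ` and `h t¹ … tⁿ` of type `τ`. -/
inductive Spine2 (S : Ty → Type) : Ty → Ty → Type
  | nil {τ} : Spine2 S τ τ
  | cons {a σ τ} (s t : Tm S [] a) (rest : Spine2 S σ τ) : Spine2 S (arr a σ) τ

def appSpineL : ∀ {σ τ}, Tm S [] σ → Spine2 S σ τ → Tm S [] τ
  | _, _, h, .nil => h
  | _, _, h, .cons s _ rest => appSpineL (.app h s) rest

def appSpineR : ∀ {σ τ}, Tm S [] σ → Spine2 S σ τ → Tm S [] τ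
  | _, _, h, .nil => h
  | _, _, h, .cons _ t rest => appSpineR (.app h t) rest

/-- `∃ i, (sⁱ ≠ tⁱ) ∈ H` for a paired spine. -/
def ExistsNeq (H : Set (Tm S [] o)) : ∀ {σ τ}, Spine2 S σ τ → Prop
  | _, _, .nil => False
  | _, _, .cons (a := a) s t rest => negT (eqT a s t) ∈ H ∨ ExistsNeq H rest

/-- Steen's acceptable Hintikka sets: sets of closed formulas (sentences) satisfying
the ten properties `∇_c, ∇_βη, ∇_=^r, ∇_=^s, ∇_b^+, ∇_b^-, ∇_f^+, ∇_f^-, ∇_m, ∇_d`. -/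
structure Acceptable (S : Ty → Type) (H : Set (Tm S [] o)) : Prop where
  nabla_c : ∀ s : Tm S [] o, ¬ (s ∈ H ∧ negT s ∈ H)
  nabla_betaEta : ∀ s t : Tm S [] o, Conv s t → s ∈ H → t ∈ H
  nabla_eq_r : ∀ {τ} (s : Tm S [] τ), negT (eqT τ s s) ∉ H
  nabla_eq_s : ∀ {τ} (u : Tm S [τ] o) (s t : Tm S [] τ),
      subst1 s u ∈ H → eqT τ s t ∈ H → subst1 t u ∈ H
  nabla_b_pos : ∀ s t : Tm S [] o, eqT o s t ∈ H →
      (s ∈ H ∧ t ∈ H) ∨ (negT s ∈ H ∧ negT t ∈ H)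
  nabla_b_neg : ∀ s t : Tm S [] o, negT (eqT o s t) ∈ H →
      (s ∈ H ∧ negT t ∈ H) ∨ (negT s ∈ H ∧ t ∈ H)
  nabla_f_pos : ∀ {a b} (f g : Tm S [] (arr a b)), eqT (arr a b) f g ∈ H →
      ∀ s : Tm S [] a, eqT b (.app f s) (.app g s) ∈ H
  nabla_f_neg : ∀ {a b} (f g : Tm S [] (arr a b)), negT (eqT (arr a b) f g) ∈ H →
      ∃ w : S a, negT (eqT b (.app f (.par w)) (.app g (.par w))) ∈ H
  nabla_m : ∀ s t : Tm S [] o, Atomic s → Atomic t → s ∈ H → negT t ∈ H →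
      negT (eqT o s t) ∈ H
  nabla_d : ∀ {σ τ} (h : Tm S [] σ) (sp : Spine2 S σ τ),
      negT (eqT τ (appSpineL h sp) (appSpineR h sp)) ∈ H → ExistsNeq H sp

/-- `H` is saturated iff `s ∈ H` or `¬s ∈ H` for every closed formula `s`. -/
def Saturated (H : Set (Tm S [] o)) : Prop :=
  ∀ s : Tm S [] o, s ∈ H ∨ negT s ∈ H

variable {S : Ty → Type} {H : Set (Tm S [] Ty.o)}


theorem subst_rename' {Γ Δ E} (r : Ren Γ Δ) (σ : Sub S Δ E) :
    ∀ {τ} (u : Tm S Γ τ), subst σ (rename r u) = subst (fun τ v => σ τ (r τ v)) u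
  | _, .var v => rfl
  | _, .par p => rfl
  | _, .eq τ => rfl
  | _, .app f a => by simp [rename, subst, subst_rename']
  | _, .lam (a := a) b => by
      simp only [rename, subst, Tm.lam.injEq]
      rw [subst_rename']
      congr 1
      funext τ v
      cases v with
      | vz => rfl
      | vs w => rfl

theorem subst_varRen' {Γ Δ} (r : Ren Γ Δ) :
    ∀ {τ} (u : Tm S Γ τ), subst (fun τ v => .var (r τ v)) u = rename r u
  | _, .var v => rfl
  | _, .par p => rfl
  | _, .eq τ => rfl
  | _, .app f a => by simp [rename, subst, subst_varRen']
  | _, .lam (a := a) b => by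
      simp only [rename, subst, Tm.lam.injEq]
      rw [← subst_varRen' (Ren.lift r a) b]
      congr 1
      funext τ v
      cases v with
      | vz => rfl
      | vs w => rfl

theorem subst_closed' {Δ τ} (σ : Sub S [] Δ) (u : Tm S [] τ) :
    subst σ u = wk0 u := by
  have h : σ = fun τ v => .var (Ren.fromEmpty τ v) := by
    funext τ v; exact nomatch v
  rw [h, subst_varRen']; rfl

theorem rename_closed' {Δ τ} (r : Ren [] Δ) (u : Tm S [] τ) :
    rename r u = wk0 u := by
  have h : r = Ren.fromEmpty := by funext τ v; exact nomatch v
  rw [h]; rfl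

theorem subst_wk0' {Δ Δ' τ} (σ : Sub S Δ' Δ) (u : Tm S [] τ) :
    subst σ (wk0 (Γ := Δ') u) = wk0 u := by
  show subst σ (rename Ren.fromEmpty u) = wk0 u
  rw [subst_rename']; exact subst_closed' _ u

theorem rename_id' : ∀ {Γ τ} (u : Tm S Γ τ), rename (fun _ v => v) u = u
  | _, _, .var v => rfl
  | _, _, .par p => rfl
  | _, _, .eq τ => rfl
  | _, _, .app f a => by simp [rename, rename_id']
  | Γ, _, .lam (a := a) b => by
      simp only [rename, Tm.lam.injEq]
      have h : (Ren.lift (Γ := Γ) (Δ := Γ) (fun _ v => v) a) = (fun _ v => v) := by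
        funext τ v; cases v <;> rfl
      rw [h]; exact rename_id' b

theorem wk0_closed' {τ} (u : Tm S [] τ) : wk0 (Γ := []) u = u := by
  show rename Ren.fromEmpty u = u
  rw [show (Ren.fromEmpty (Γ := [])) = fun τ (v : Var [] τ) => v from
    funext fun τ => funext fun v => nomatch v]
  exact rename_id' u

/-- Conversion: `s ∨ t` reduces to `¬(¬s ∧ ¬t)`. -/
theorem conv_or' (s t : Tm S [] Ty.o) :
    Conv (.app (.app orC s) t) (negT (.app (.app andC (negT s)) (negT t))) := by
  have h1 := Conv.appCongr
    (Conv.beta (S := S)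
      (.lam (negT (.app (.app andC (negT (.var (.vs .vz)))) (negT (.var .vz))))) s)
    (Conv.refl t)
  have h2 := Conv.beta
    (subst (Sub.lift (Sub.single s) Ty.o)
      (negT (.app (.app andC (negT (.var (.vs .vz)))) (negT (.var .vz))))) t
  have key : subst1 t (subst (Sub.lift (Sub.single s) Ty.o)
      (negT (.app (.app andC (negT (.var (.vs .vz)))) (negT (.var .vz))))) =
      negT (.app (.app andC (negT s)) (negT t)) := by
    simp [subst1, subst, Sub.lift, Sub.single, negT, notC, andC, eqT, botT, topT,
      rename, subst_rename', subst_closed', wk0_closed', rename_closed', subst_wk0']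
  exact Conv.trans h1 (key ▸ h2)

/-- Conversion: `A ∧ B` reduces to the defining equation. -/
theorem conv_and' (A B : Tm S [] Ty.o) :
    Conv (.app (.app andC A) B)
      (eqT (arr (arr Ty.o (arr Ty.o Ty.o)) Ty.o)
        (.lam (.app (.app (.var .vz) topT) topT))
        (.lam (.app (.app (.var .vz) (wk0 A)) (wk0 B)))) := by
  have h1 := Conv.appCongr
    (Conv.beta (S := S)
      (.lam (eqT (arr (arr Ty.o (arr Ty.o Ty.o)) Ty.o)
        (.lam (.app (.app (.var .vz) topT) topT))
        (.lam (.app (.app (.var .vz) (.var (.vs (.vs .vz)))) (.var (.vs .vz)))))) A)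
    (Conv.refl B)
  have h2 := Conv.beta
    (subst (Sub.lift (Sub.single A) Ty.o)
      (eqT (arr (arr Ty.o (arr Ty.o Ty.o)) Ty.o)
        (.lam (.app (.app (.var .vz) topT) topT))
        (.lam (.app (.app (.var .vz) (.var (.vs (.vs .vz)))) (.var (.vs .vz)))))) B
  have key : subst1 B (subst (Sub.lift (Sub.single A) Ty.o)
      (eqT (arr (arr Ty.o (arr Ty.o Ty.o)) Ty.o)
        (.lam (.app (.app (.var .vz) topT) topT))
        (.lam (.app (.app (.var .vz) (.var (.vs (.vs .vz)))) (.var (.vs .vz)))))) =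
      (eqT (arr (arr Ty.o (arr Ty.o Ty.o)) Ty.o)
        (.lam (.app (.app (.var .vz) topT) topT))
        (.lam (.app (.app (.var .vz) (wk0 A)) (wk0 B)))) := by
    simp [subst1, subst, Sub.lift, Sub.single, negT, notC, andC, eqT, botT, topT,
      rename, subst_rename', subst_closed', wk0_closed', rename_closed', subst_wk0']
  exact Conv.trans h1 (key ▸ h2)

theorem keyR' {τ₁ τ₂} (A : Tm S [] τ₁) (B : Tm S [] τ₂)
    (p : Tm S [] (arr τ₁ (arr τ₂ Ty.o))) :
    subst1 p ((.app (.app (.var .vz) (wk0 A)) (wk0 B) :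
      Tm S [arr τ₁ (arr τ₂ Ty.o)] Ty.o)) = Tm.app (Tm.app p A) B := by
  simp [subst1, subst, Sub.lift, Sub.single, rename, subst_rename',
      subst_closed', wk0_closed', rename_closed', subst_wk0']

theorem neg_top_not_mem' {H : Set (Tm S [] Ty.o)} (hH : Acceptable S H) :
    negT (topT) ∉ H := fun h => hH.nabla_eq_r (Tm.eq Ty.o) h

theorem neg_of_neg_eq_top' {H : Set (Tm S [] Ty.o)} (hH : Acceptable S H)
    (u : Tm S [] Ty.o) (h : negT (eqT Ty.o topT u) ∈ H) : negT u ∈ H := by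
  rcases hH.nabla_b_neg topT u h with ⟨_, h2⟩ | ⟨h1, _⟩
  · exact h2
  · exact absurd h1 (neg_top_not_mem' hH)

/-- Double negation elimination inside a Hintikka set. -/
theorem dne' {H : Set (Tm S [] Ty.o)} (hH : Acceptable S H)
    (s : Tm S [] Ty.o) (h : negT (negT s) ∈ H) : s ∈ H := by
  have key : subst1 s (eqT Ty.o (.var .vz) botT) = eqT Ty.o s botT := by
    simp [subst1, subst, Sub.lift, Sub.single, eqT, botT, topT, rename]
  have hc : Conv (negT (negT s)) (negT (eqT Ty.o s botT)) :=
    Conv.appCongr (Conv.refl notC) (key ▸ Conv.beta (eqT Ty.o (.var .vz) botT) s)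
  have h2 := hH.nabla_betaEta _ _ hc h
  rcases hH.nabla_b_neg s botT h2 with ⟨hs, _⟩ | ⟨hns, _⟩
  · exact hs
  · exact absurd ⟨hns, h⟩ (hH.nabla_c (negT s))

/-- If `(s ∨ t) ∈ H`, then `s ∈ H` or `t ∈ H`. -/
theorem or_mem (hH : Acceptable S H) (s t : Tm S [] Ty.o)
    (h : Tm.app (Tm.app orC s) t ∈ H) : s ∈ H ∨ t ∈ H := by
  -- (s ∨ t) converts to ¬(eqT ... (λF. F ⊤ ⊤) (λF. F (¬s) (¬t)))
  have hc : Conv (Tm.app (Tm.app orC s) t)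
      (negT (eqT (arr (arr Ty.o (arr Ty.o Ty.o)) Ty.o)
        (.lam (.app (.app (.var .vz) topT) topT))
        (.lam (.app (.app (.var .vz) (wk0 (negT s))) (wk0 (negT t)))))) :=
    Conv.trans (conv_or' s t) (Conv.appCongr (Conv.refl notC) (conv_and' (negT s) (negT t)))
  have hand : negT (eqT (arr (arr Ty.o (arr Ty.o Ty.o)) Ty.o)
      (.lam (.app (.app (.var .vz) topT) topT))
      (.lam (.app (.app (.var .vz) (wk0 (negT s))) (wk0 (negT t))))) ∈ H :=
    hH.nabla_betaEta _ _ hc h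
  obtain ⟨w, hw⟩ := hH.nabla_f_neg _ _ hand
  -- beta-reduce the two applications to the parameter w
  have keyL : subst1 (Tm.par w) ((.app (.app (.var .vz) topT) topT :
      Tm S [arr Ty.o (arr Ty.o Ty.o)] Ty.o)) =
      Tm.app (Tm.app (Tm.par w) topT) topT := by
    simp [subst1, subst, Sub.lift, Sub.single, topT, eqT, rename]
  have keyR := keyR' (negT s) (negT t) (Tm.par w)
  have hc2 : Conv (negT (eqT Ty.o
        (.app (.lam (.app (.app (.var .vz) topT) topT)) (Tm.par w))
        (.app (.lam (.app (.app (.var .vz) (wk0 (negT s))) (wk0 (negT t)))) (Tm.par w))))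
      (negT (eqT Ty.o (Tm.app (Tm.app (Tm.par w) topT) topT)
        (Tm.app (Tm.app (Tm.par w) (negT s)) (negT t)))) :=
    Conv.appCongr (Conv.refl notC)
      (Conv.appCongr
        (Conv.appCongr (Conv.refl _) (keyL ▸ Conv.beta _ (Tm.par w)))
        (keyR ▸ Conv.beta _ (Tm.par w)))
  have hw2 : negT (eqT Ty.o (Tm.app (Tm.app (Tm.par w) topT) topT)
      (Tm.app (Tm.app (Tm.par w) (negT s)) (negT t))) ∈ H :=
    hH.nabla_betaEta _ _ hc2 hw
  have hd := hH.nabla_d (Tm.par w)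
    (Spine2.cons topT (negT s) (Spine2.cons topT (negT t) Spine2.nil)) hw2
  obtain h1 | h2 | h3 :=
    (hd : negT (eqT Ty.o topT (negT s)) ∈ H ∨ negT (eqT Ty.o topT (negT t)) ∈ H ∨ False)
  · exact Or.inl (dne' hH s (neg_of_neg_eq_top' hH (negT s) h1))
  · exact Or.inr (dne' hH t (neg_of_neg_eq_top' hH (negT t) h2))
  · exact h3.elim

end HintikkaHOL
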